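/- arXiv:hep-th/0105178 — 2 statements merged into one kernel-verified Lean document; each statement's English description precedes it below -/
import Mathlib

section
/- For every real ν with 0 ≤ ν < 1: ∫₀^∞ (1/t)·sinh(νt)/(2·cosh²(t/2)) dt = (1/π)·∫₀^{πν} t / sin(t) dt. -/
open MeasureTheory Set Real

-- 4 cosh(t/2)^2 = e^t + 2 + e^{-t}
lemma four_cosh_sq (t : ℝ) : 4 * Real.cosh (t/2) ^ 2 = Real.exp t + 2 + Real.exp (-t) := by
  rw [Real.cosh_eq]
  have h1 : Real.exp (t/2) * Real.exp (t/2) = Real.exp t := by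
    rw [← Real.exp_add]; ring_nf
  have h2 : Real.exp (t/2) * Real.exp (-(t/2)) = 1 := by
    rw [← Real.exp_add]; simp
  have h3 : Real.exp (-(t/2)) * Real.exp (-(t/2)) = Real.exp (-t) := by
    rw [← Real.exp_add]; ring_nf
  nlinarith [h1, h2, h3]

lemma denom_pos (t : ℝ) : 0 < 4 * Real.cosh (t/2) ^ 2 := by
  positivity

lemma denom_ge (t : ℝ) (ht : 0 ≤ t) : Real.exp t ≤ 4 * Real.cosh (t/2) ^ 2 := by
  rw [four_cosh_sq]
  nlinarith [Real.exp_pos (-t)]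

-- integrability on Ioi 0 for s < 1 (s can be negative)
lemma intOn_Ioi {s : ℝ} (hs : s < 1) :
    IntegrableOn (fun t => Real.exp (s*t) / (4 * Real.cosh (t/2) ^ 2)) (Ioi (0:ℝ)) := by
  have hint : IntegrableOn (fun t => Real.exp (-(1-s)*t)) (Ioi (0:ℝ)) :=
    exp_neg_integrableOn_Ioi 0 (by linarith)
  refine Integrable.mono hint ?_ ?_
  · exact (Continuous.aestronglyMeasurable (by fun_prop (disch := intro t; positivity))).restrict
  · filter_upwards [ae_restrict_mem measurableSet_Ioi] with t ht
    have ht' : (0:ℝ) < t := ht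
    have h1 : Real.exp t ≤ 4 * Real.cosh (t/2) ^ 2 := denom_ge t ht'.le
    have h2 : 0 < 4 * Real.cosh (t/2) ^ 2 := denom_pos t
    rw [Real.norm_eq_abs, Real.norm_eq_abs, abs_of_pos (by positivity),
      abs_of_pos (Real.exp_pos _)]
    rw [div_le_iff₀ h2]
    calc Real.exp (s*t) = Real.exp (-(1-s)*t) * Real.exp t := by
          rw [← Real.exp_add]; ring_nf
      _ ≤ Real.exp (-(1-s)*t) * (4 * Real.cosh (t/2) ^ 2) := by
          exact mul_le_mul_of_nonneg_left h1 (Real.exp_pos _).le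

lemma intOn_Iic {s : ℝ} (hs : -1 < s) :
    IntegrableOn (fun t => Real.exp (s*t) / (4 * Real.cosh (t/2) ^ 2)) (Iic (0:ℝ)) := by
  have hIoi : IntegrableOn (fun t => Real.exp (-s*t) / (4 * Real.cosh (t/2) ^ 2)) (Ioi (0:ℝ)) :=
    intOn_Ioi (by linarith)
  rw [← Measure.map_neg_eq_self (volume : Measure ℝ)]
  have m : MeasurableEmbedding fun x : ℝ => -x := (Homeomorph.neg ℝ).measurableEmbedding
  rw [m.integrableOn_map_iff]
  have : ((fun t => Real.exp (s*t) / (4 * Real.cosh (t/2) ^ 2)) ∘ fun x : ℝ => -x)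
      = fun t => Real.exp (-s*t) / (4 * Real.cosh (t/2) ^ 2) := by
    funext t
    simp only [Function.comp_apply]
    rw [show (-t)/2 = -(t/2) by ring, Real.cosh_neg]
    ring_nf
  rw [this]
  simp_rw [neg_preimage, neg_Iic, neg_zero]
  exact Iff.mpr integrableOn_Ici_iff_integrableOn_Ioi hIoi


lemma logistic_hasDeriv (t : ℝ) :
    HasDerivAt (fun t : ℝ => Real.exp t / (1 + Real.exp t))
      (Real.exp t / (1 + Real.exp t) ^ 2) t := by
  have h1 : (0:ℝ) < 1 + Real.exp t := by positivity
  have := (Real.hasDerivAt_exp t).div ((Real.hasDerivAt_exp t).const_add 1) (ne_of_gt h1)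
  refine this.congr_deriv ?_
  rw [div_eq_div_iff (by positivity) (by positivity)]
  ring

lemma logistic_image :
    (fun t : ℝ => Real.exp t / (1 + Real.exp t)) '' Set.univ = Set.Ioo 0 1 := by
  ext y
  simp only [Set.image_univ, Set.mem_range, Set.mem_Ioo]
  constructor
  · rintro ⟨t, rfl⟩
    have h1 : (0:ℝ) < 1 + Real.exp t := by positivity
    constructor
    · positivity
    · rw [div_lt_one h1]; linarith [Real.exp_pos t]
  · rintro ⟨hy0, hy1⟩
    refine ⟨Real.log (y / (1 - y)), ?_⟩
    have h2 : (0:ℝ) < 1 - y := by linarith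
    have h3 : (0:ℝ) < y / (1 - y) := div_pos hy0 h2
    rw [Real.exp_log h3]
    field_simp
    ring

lemma logistic_injOn :
    Set.InjOn (fun t : ℝ => Real.exp t / (1 + Real.exp t)) Set.univ := by
  intro a _ b _ h
  simp only at h
  have ha : (0:ℝ) < 1 + Real.exp a := by positivity
  have hb : (0:ℝ) < 1 + Real.exp b := by positivity
  rw [div_eq_div_iff ha.ne' hb.ne'] at h
  have : Real.exp a = Real.exp b := by nlinarith
  exact Real.exp_injective this

lemma exp_integral_eq_beta_integrand {s : ℝ} (hs0 : 0 < s) (hs1 : s < 1) :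
    ∫ t : ℝ, Real.exp (s*t) / (4 * Real.cosh (t/2) ^ 2)
      = ∫ x in Set.Ioo (0:ℝ) 1, x ^ s * (1-x) ^ (-s) := by
  have key := MeasureTheory.integral_image_eq_integral_abs_deriv_smul
    (s := Set.univ) (f := fun t : ℝ => Real.exp t / (1 + Real.exp t))
    (f' := fun t : ℝ => Real.exp t / (1 + Real.exp t) ^ 2)
    MeasurableSet.univ
    (fun x _ => (logistic_hasDeriv x).hasDerivWithinAt)
    logistic_injOn (fun x => x ^ s * (1-x) ^ (-s))
  rw [logistic_image] at key
  rw [key, Measure.restrict_univ]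
  congr 1
  funext t
  have h1 : (0:ℝ) < 1 + Real.exp t := by positivity
  have habs : |Real.exp t / (1 + Real.exp t) ^ 2| = Real.exp t / (1 + Real.exp t) ^ 2 :=
    abs_of_pos (by positivity)
  rw [smul_eq_mul, habs]
  have h2 : (1:ℝ) - Real.exp t / (1 + Real.exp t) = (1 + Real.exp t)⁻¹ := by
    field_simp
    ring
  rw [h2]
  have h3 : ((1 + Real.exp t)⁻¹) ^ (-s) = (1 + Real.exp t) ^ s := by
    rw [Real.inv_rpow h1.le, ← Real.rpow_neg h1.le, neg_neg]
  rw [h3, Real.div_rpow (Real.exp_pos t).le h1.le]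
  have h4 : (Real.exp t) ^ s = Real.exp (s*t) := by
    rw [← Real.exp_mul, mul_comm]
  rw [h4]
  have h5 : ((1:ℝ) + Real.exp t) ^ s ≠ 0 := by positivity
  have h6 : (1 + Real.exp t)^2 = Real.exp t * (4 * Real.cosh (t/2) ^ 2) := by
    rw [four_cosh_sq]
    have := Real.exp_neg t
    have h7 : Real.exp t * Real.exp (-t) = 1 := by rw [← Real.exp_add]; simp
    nlinarith
  rw [h6]
  have h8 := Real.exp_pos t
  have h9 := denom_pos t
  field_simp

lemma beta_complex_eval {s : ℝ} (hs0 : 0 < s) (hs1 : s < 1) :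
    Complex.betaIntegral (1+s) (1-s) = ((Real.pi * s / Real.sin (Real.pi * s) : ℝ) : ℂ) := by
  have hre1 : 0 < Complex.re (1+s) := by simp; linarith
  have hre2 : 0 < Complex.re (1-s) := by
    simp [Complex.sub_re]; linarith
  have hβ := Complex.Gamma_mul_Gamma_eq_betaIntegral hre1 hre2
  have hsum : (1:ℂ) + s + (1 - s) = 2 := by ring
  rw [hsum] at hβ
  have hΓ2 : Complex.Gamma 2 = 1 := by
    have : (2:ℂ) = 1 + 1 := by norm_num
    rw [this, Complex.Gamma_add_one 1 one_ne_zero, Complex.Gamma_one, one_mul]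
  rw [hΓ2, one_mul] at hβ
  have h1s : (1:ℂ) + s = (s:ℂ) + 1 := by ring
  have hsne : (s:ℂ) ≠ 0 := by
    simpa using hs0.ne'
  rw [← hβ, h1s, Complex.Gamma_add_one _ hsne, mul_assoc,
    Complex.Gamma_mul_Gamma_one_sub]
  rw [show ((Real.pi:ℂ) * s) = ((Real.pi * s : ℝ) : ℂ) by push_cast; ring] at *
  rw [← Complex.ofReal_sin]
  push_cast
  ring

lemma beta_real_eval {s : ℝ} (hs0 : 0 < s) (hs1 : s < 1) :
    ∫ x in Set.Ioo (0:ℝ) 1, x ^ s * (1-x) ^ (-s)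
      = Real.pi * s / Real.sin (Real.pi * s) := by
  have h2 : Complex.betaIntegral (1+s) (1-s)
      = ((∫ x in (0:ℝ)..1, x ^ s * (1-x) ^ (-s) : ℝ) : ℂ) := by
    rw [Complex.betaIntegral, ← intervalIntegral.integral_ofReal]
    apply intervalIntegral.integral_congr
    intro x hx
    rw [Set.uIcc_of_le (by norm_num : (0:ℝ) ≤ 1)] at hx
    obtain ⟨hx0, hx1⟩ := hx
    have hx1' : (0:ℝ) ≤ 1 - x := by linarith
    have e1 : (1:ℂ) + s - 1 = (s:ℂ) := by ring
    have e2 : (1:ℂ) - s - 1 = ((-s : ℝ):ℂ) := by push_cast; ring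
    rw [e1, e2]
    beta_reduce
    rw [← Complex.ofReal_cpow hx0, show ((1:ℂ) - x) = ((1 - x : ℝ) : ℂ) by push_cast; ring,
      ← Complex.ofReal_cpow hx1']
    push_cast
    ring
  have h3 : ∫ x in Set.Ioo (0:ℝ) 1, x ^ s * (1-x) ^ (-s)
      = ∫ x in (0:ℝ)..1, x ^ s * (1-x) ^ (-s) := by
    rw [intervalIntegral.integral_of_le (by norm_num : (0:ℝ) ≤ 1),
      MeasureTheory.integral_Ioc_eq_integral_Ioo]
  rw [h3]
  have := (beta_complex_eval hs0 hs1).symm.trans h2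
  exact_mod_cast this.symm

lemma cosh_integral {s : ℝ} (hs0 : 0 < s) (hs1 : s < 1) :
    ∫ t in Set.Ioi (0:ℝ), Real.cosh (s*t) / (2 * Real.cosh (t/2) ^ 2)
      = Real.pi * s / Real.sin (Real.pi * s) := by
  have hsplit : ∀ t : ℝ, Real.cosh (s*t) / (2 * Real.cosh (t/2) ^ 2)
      = Real.exp (s*t) / (4 * Real.cosh (t/2) ^ 2)
        + Real.exp (-s*t) / (4 * Real.cosh (t/2) ^ 2) := by
    intro t
    rw [Real.cosh_eq]
    have : -(s*t) = -s*t := by ring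
    rw [this]
    ring
  simp_rw [hsplit]
  rw [MeasureTheory.integral_add (intOn_Ioi hs1) (intOn_Ioi (by linarith : -s < 1))]
  have hneg : ∫ t in Set.Ioi (0:ℝ), Real.exp (-s*t) / (4 * Real.cosh (t/2) ^ 2)
      = ∫ t in Set.Iic (0:ℝ), Real.exp (s*t) / (4 * Real.cosh (t/2) ^ 2) := by
    rw [← neg_zero, ← integral_comp_neg_Ioi, neg_zero]
    congr 1
    funext t
    rw [show (-t)/2 = -(t/2) by ring, Real.cosh_neg]
    ring_nf
  rw [hneg, add_comm, intervalIntegral.integral_Iic_add_Ioi (intOn_Iic (by linarith : (-1:ℝ) < s)) (intOn_Ioi hs1)]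
  rw [exp_integral_eq_beta_integrand hs0 hs1, beta_real_eval hs0 hs1]

lemma inner_integral {ν : ℝ} (hν : 0 ≤ ν) {t : ℝ} (ht : 0 < t) :
    ∫ s in Set.Ioc (0:ℝ) ν, Real.cosh (s*t) / (2 * Real.cosh (t/2) ^ 2)
      = (1 / t) * (Real.sinh (ν*t) / (2 * Real.cosh (t/2) ^ 2)) := by
  have hC := denom_pos t
  have hint : ∫ s in (0:ℝ)..ν, Real.cosh (s*t) = Real.sinh (ν*t) / t := by
    have hderiv : ∀ s ∈ Set.uIcc (0:ℝ) ν,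
        HasDerivAt (fun s => Real.sinh (s*t) / t) (Real.cosh (s*t)) s := by
      intro s _
      have h1 : HasDerivAt (fun s : ℝ => s*t) t s := hasDerivAt_mul_const t
      have h2 := (Real.hasDerivAt_sinh (s*t)).comp s h1
      have h3 := h2.div_const t
      refine h3.congr_deriv ?_
      exact mul_div_cancel_right₀ _ ht.ne'
    have hcont : IntervalIntegrable (fun s => Real.cosh (s*t)) volume 0 ν :=
      (Continuous.intervalIntegrable (by fun_prop) _ _)
    rw [intervalIntegral.integral_eq_sub_of_hasDerivAt hderiv hcont]
    simp
  have : ∫ s in Set.Ioc (0:ℝ) ν, Real.cosh (s*t) / (2 * Real.cosh (t/2) ^ 2)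
      = (∫ s in Set.Ioc (0:ℝ) ν, Real.cosh (s*t)) / (2 * Real.cosh (t/2) ^ 2) :=
    integral_div _ _
  rw [this, ← intervalIntegral.integral_of_le hν, hint]
  field_simp

lemma prod_integrable {ν : ℝ} (h0 : 0 < ν) (h1 : ν < 1) :
    Integrable (fun p : ℝ × ℝ => Real.cosh (p.1*p.2) / (2 * Real.cosh (p.2/2) ^ 2))
      ((volume.restrict (Set.Ioc 0 ν)).prod (volume.restrict (Set.Ioi 0))) := by
  have hg : Integrable (fun p : ℝ × ℝ => (1:ℝ) * (2 * Real.exp (-(1-ν)*p.2)))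
      ((volume.restrict (Set.Ioc 0 ν)).prod (volume.restrict (Set.Ioi 0))) := by
    apply Integrable.mul_prod (f := fun _ : ℝ => (1:ℝ))
      (g := fun t : ℝ => 2 * Real.exp (-(1-ν)*t))
    · exact integrable_const _
    · exact ((exp_neg_integrableOn_Ioi 0 (by linarith : (0:ℝ) < 1 - ν)).const_mul 2)
  refine hg.mono' ?_ ?_
  · exact (Continuous.aestronglyMeasurable (by fun_prop (disch := intro p; positivity)))
  · rw [Measure.prod_restrict]
    filter_upwards [ae_restrict_mem (measurableSet_Ioc.prod measurableSet_Ioi)] with p hp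
    obtain ⟨hs, ht⟩ := hp
    obtain ⟨hs0, hsν⟩ := hs
    have ht0 : (0:ℝ) < p.2 := ht
    have hC := denom_pos p.2
    have hcosh : Real.cosh (p.1*p.2) ≤ Real.exp (ν*p.2) := by
      rw [Real.cosh_eq]
      have e1 : Real.exp (p.1*p.2) ≤ Real.exp (ν*p.2) :=
        Real.exp_le_exp.mpr (by nlinarith)
      have e2 : Real.exp (-(p.1*p.2)) ≤ Real.exp (ν*p.2) :=
        Real.exp_le_exp.mpr (by nlinarith)
      linarith
    have hden : Real.exp p.2 ≤ 4 * Real.cosh (p.2/2) ^ 2 := denom_ge p.2 ht0.le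
    rw [Real.norm_eq_abs, abs_of_pos (by positivity)]
    rw [one_mul, div_le_iff₀ (by positivity)]
    have key : Real.exp (ν*p.2) = Real.exp (-(1-ν)*p.2) * Real.exp p.2 := by
      rw [← Real.exp_add]; ring_nf
    calc Real.cosh (p.1*p.2) ≤ Real.exp (ν*p.2) := hcosh
      _ = Real.exp (-(1-ν)*p.2) * Real.exp p.2 := key
      _ ≤ 2 * Real.exp (-(1-ν)*p.2) * (2 * Real.cosh (p.2/2) ^ 2) := by
          nlinarith [Real.exp_pos (-(1-ν)*p.2)]

theorem E_nu_integral_identity (ν : ℝ) (h0 : 0 ≤ ν) (h1 : ν < 1) :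
    ∫ t in Set.Ioi (0 : ℝ), (1 / t) * (Real.sinh (ν * t) / (2 * (Real.cosh (t / 2)) ^ 2))
      = (1 / Real.pi) * ∫ t in (0 : ℝ)..(Real.pi * ν), t / Real.sin t := by
  rcases eq_or_lt_of_le h0 with rfl | hν
  · simp [Real.sinh_zero]
  calc ∫ t in Set.Ioi (0 : ℝ), (1 / t) * (Real.sinh (ν * t) / (2 * (Real.cosh (t / 2)) ^ 2))
      = ∫ t in Set.Ioi (0:ℝ), ∫ s in Set.Ioc (0:ℝ) ν,
          Real.cosh (s*t) / (2 * Real.cosh (t/2) ^ 2) := by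
        refine setIntegral_congr_fun measurableSet_Ioi (fun t ht => ?_)
        exact (inner_integral h0 ht).symm
    _ = ∫ s in Set.Ioc (0:ℝ) ν, ∫ t in Set.Ioi (0:ℝ),
          Real.cosh (s*t) / (2 * Real.cosh (t/2) ^ 2) := by
        exact (MeasureTheory.integral_integral_swap (prod_integrable hν h1)).symm
    _ = ∫ s in Set.Ioc (0:ℝ) ν, Real.pi * s / Real.sin (Real.pi * s) := by
        refine setIntegral_congr_fun measurableSet_Ioc (fun s hs => ?_)
        exact cosh_integral hs.1 (lt_of_le_of_lt hs.2 h1)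
    _ = ∫ s in (0:ℝ)..ν, Real.pi * s / Real.sin (Real.pi * s) :=
        (intervalIntegral.integral_of_le h0).symm
    _ = (1 / Real.pi) * ∫ t in (0:ℝ)..(Real.pi * ν), t / Real.sin t := by
        have := intervalIntegral.integral_comp_mul_left (a := (0:ℝ)) (b := ν)
          (fun x => x / Real.sin x) (Real.pi_ne_zero)
        simp only [mul_zero] at this
        rw [this, smul_eq_mul, one_div]
end

section
/- Let 0 < ν and let g be a meromorphic function on ℂ satisfying the shift relation g(z + iπν) = −(cos(z/(2i)) / sin((z + iπν)/(2i)))·g(z) wherever defined, and having simple poles at z = iπlν for l = 0, 1, 2, … with residues R_l = Res_{z = iπlν} g(z). Then for every l ≥ 1: R_l = R_0 · (−1)^l / sin(πlν/2) · ∏_{j=1}^{l−1} cot(πjν/2) (assuming sin(πjν/2) ≠ 0 for 1 ≤ j ≤ l). -/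
open Filter Topology Finset

lemma residue_step (ν : ℝ) (g : ℂ → ℂ) (R : ℕ → ℂ)
    (hshift : ∀ z : ℂ,
      g (z + (Real.pi : ℂ) * Complex.I * (ν : ℂ)) *
          Complex.sin ((z + (Real.pi : ℂ) * Complex.I * (ν : ℂ)) / (2 * Complex.I))
        = -Complex.cos (z / (2 * Complex.I)) * g z)
    (hres : ∀ l : ℕ,
      Tendsto (fun z : ℂ => (z - (Real.pi : ℂ) * Complex.I * (l : ℂ) * (ν : ℂ)) * g z)
        (𝓝[≠] ((Real.pi : ℂ) * Complex.I * (l : ℂ) * (ν : ℂ))) (𝓝 (R l)))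
    (k : ℕ) (hs : Real.sin (Real.pi * (k + 1) * ν / 2) ≠ 0) :
    R (k + 1) = -((Real.cos (Real.pi * k * ν / 2) : ℂ) /
      ((Real.sin (Real.pi * (k + 1) * ν / 2) : ℝ) : ℂ)) * R k := by
  set a : ℂ := (Real.pi : ℂ) * Complex.I * (ν : ℂ) with ha
  set c : ℕ → ℂ := fun m => (Real.pi : ℂ) * Complex.I * (m : ℂ) * (ν : ℂ) with hc
  have hca : c (k + 1) = c k + a := by simp only [hc, ha]; push_cast; ring
  -- arguments are real
  have harg : ∀ m : ℕ, c m / (2 * Complex.I) = ((Real.pi * m * ν / 2 : ℝ) : ℂ) := by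
    intro m
    simp only [hc]
    push_cast
    field_simp
  have hsinC : Complex.sin (c (k + 1) / (2 * Complex.I)) =
      ((Real.sin (Real.pi * (k + 1) * ν / 2) : ℝ) : ℂ) := by
    rw [harg, Complex.ofReal_sin]; push_cast; ring_nf
  have hcosC : Complex.cos (c k / (2 * Complex.I)) =
      ((Real.cos (Real.pi * k * ν / 2) : ℝ) : ℂ) := by
    rw [harg, Complex.ofReal_cos]
  have hsne : Complex.sin (c (k + 1) / (2 * Complex.I)) ≠ 0 := by
    rw [hsinC]; exact_mod_cast hs
  -- translation map
  have ht : Tendsto (fun w : ℂ => w - a) (𝓝[≠] (c (k + 1))) (𝓝[≠] (c k)) := by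
    rw [hca]
    apply tendsto_nhdsWithin_of_tendsto_nhds_of_eventually_within
    · have h0 : Tendsto (fun w : ℂ => w - a) (𝓝[≠] (c k + a)) (𝓝 (c k + a - a)) :=
        ((continuous_sub_right a).tendsto (c k + a)).mono_left (nhdsWithin_le_nhds (s := {c k + a}ᶜ))
      simpa using h0
    · filter_upwards [self_mem_nhdsWithin] with w hw
      simp only [Set.mem_compl_iff, Set.mem_singleton_iff] at hw ⊢
      intro h
      exact hw (by rw [sub_eq_iff_eq_add] at h; exact h)
  have h1 : Tendsto (fun w : ℂ => (w - a - c k) * g (w - a)) (𝓝[≠] (c (k + 1)))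
      (𝓝 (R k)) := (hres k).comp ht
  have h2 : Tendsto (fun w : ℂ => -Complex.cos ((w - a) / (2 * Complex.I)) /
      Complex.sin (w / (2 * Complex.I))) (𝓝[≠] (c (k + 1)))
      (𝓝 (-Complex.cos (c k / (2 * Complex.I)) / Complex.sin (c (k + 1) / (2 * Complex.I)))) := by
    apply Tendsto.mono_left _ nhdsWithin_le_nhds
    apply Tendsto.div
    · have : ContinuousAt (fun w : ℂ => -Complex.cos ((w - a) / (2 * Complex.I))) (c (k + 1)) := by
        fun_prop
      have := this.tendsto
      simpa [hca] using this
    · exact (Complex.continuous_sin.comp (continuous_id.div_const _)).continuousAt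
    · exact hsne
  have heq : (fun w : ℂ => (w - c (k + 1)) * g w) =ᶠ[𝓝[≠] (c (k + 1))]
      (fun w : ℂ => -Complex.cos ((w - a) / (2 * Complex.I)) /
        Complex.sin (w / (2 * Complex.I)) * ((w - a - c k) * g (w - a))) := by
    have hev : ∀ᶠ w : ℂ in 𝓝[≠] (c (k + 1)), Complex.sin (w / (2 * Complex.I)) ≠ 0 := by
      apply Filter.Eventually.filter_mono nhdsWithin_le_nhds
      exact ((Complex.continuous_sin.comp (continuous_id.div_const _)).continuousAt).eventually_ne hsne
    filter_upwards [hev] with w hw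
    have hsh := hshift (w - a)
    simp only [sub_add_cancel] at hsh
    have hg : g w = -Complex.cos ((w - a) / (2 * Complex.I)) * g (w - a) /
        Complex.sin (w / (2 * Complex.I)) := by
      rw [eq_div_iff hw]; linear_combination hsh
    rw [hca, hg]; ring
  have h3 : Tendsto (fun w : ℂ => (w - c (k + 1)) * g w) (𝓝[≠] (c (k + 1)))
      (𝓝 (-Complex.cos (c k / (2 * Complex.I)) / Complex.sin (c (k + 1) / (2 * Complex.I)) * R k)) :=
    Tendsto.congr' heq.symm (h2.mul h1)
  have := tendsto_nhds_unique (hres (k + 1)) (by exact_mod_cast h3)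
  rw [this, hcosC, hsinC]
  ring

theorem residue_recursion_Rl (ν : ℝ) (hν : 0 < ν) (g : ℂ → ℂ) (R : ℕ → ℂ)
    (hshift : ∀ z : ℂ,
      g (z + (Real.pi : ℂ) * Complex.I * (ν : ℂ)) *
          Complex.sin ((z + (Real.pi : ℂ) * Complex.I * (ν : ℂ)) / (2 * Complex.I))
        = -Complex.cos (z / (2 * Complex.I)) * g z)
    (hres : ∀ l : ℕ,
      Tendsto (fun z : ℂ => (z - (Real.pi : ℂ) * Complex.I * (l : ℂ) * (ν : ℂ)) * g z)
        (𝓝[≠] ((Real.pi : ℂ) * Complex.I * (l : ℂ) * (ν : ℂ))) (𝓝 (R l)))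
    (l : ℕ) (hl : 1 ≤ l)
    (hsin : ∀ j : ℕ, 1 ≤ j → j ≤ l → Real.sin (Real.pi * j * ν / 2) ≠ 0) :
    R l = R 0 * ((-1 : ℂ) ^ l / ((Real.sin (Real.pi * l * ν / 2) : ℝ) : ℂ)) *
      ∏ j ∈ Finset.Icc 1 (l - 1),
        ((Real.cos (Real.pi * j * ν / 2) / Real.sin (Real.pi * j * ν / 2) : ℝ) : ℂ) := by
  induction l, hl using Nat.le_induction with
  | base =>
    have h := residue_step ν g R hshift hres 0 (by simpa using hsin 1 le_rfl le_rfl)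
    norm_num at h
    rw [h]
    norm_num
    ring
  | succ n hn ih =>
    have hsn : ∀ j : ℕ, 1 ≤ j → j ≤ n → Real.sin (Real.pi * j * ν / 2) ≠ 0 :=
      fun j h1 h2 => hsin j h1 (h2.trans (Nat.le_succ n))
    have ihn := ih hsn
    have h := residue_step ν g R hshift hres n
      (by exact_mod_cast hsin (n + 1) (by omega) le_rfl)
    have hprod : ∏ j ∈ Finset.Icc 1 (n + 1 - 1),
        ((Real.cos (Real.pi * j * ν / 2) / Real.sin (Real.pi * j * ν / 2) : ℝ) : ℂ)
        = (∏ j ∈ Finset.Icc 1 (n - 1),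
          ((Real.cos (Real.pi * j * ν / 2) / Real.sin (Real.pi * j * ν / 2) : ℝ) : ℂ)) *
          ((Real.cos (Real.pi * n * ν / 2) / Real.sin (Real.pi * n * ν / 2) : ℝ) : ℂ) := by
      have h1 : n - 1 + 1 = n := by omega
      have h2 : n + 1 - 1 = (n - 1) + 1 := by omega
      rw [h2, Finset.prod_Icc_succ_top (by omega), h1]
    rw [h, ihn, hprod]
    have hsnn : ((Real.sin (Real.pi * n * ν / 2) : ℝ) : ℂ) ≠ 0 := by
      exact_mod_cast hsn n hn le_rfl
    have hsn1 : ((Real.sin (Real.pi * (n + 1) * ν / 2) : ℝ) : ℂ) ≠ 0 := by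
      exact_mod_cast hsin (n + 1) (by omega) le_rfl
    set_option maxHeartbeats 1000000 in
    push_cast at hsnn hsn1 ⊢
    set S : ℂ := Complex.sin ((Real.pi : ℂ) * (n : ℂ) * (ν : ℂ) / 2) with hS
    set S1 : ℂ := Complex.sin ((Real.pi : ℂ) * ((n : ℂ) + 1) * (ν : ℂ) / 2) with hS1
    set C : ℂ := Complex.cos ((Real.pi : ℂ) * (n : ℂ) * (ν : ℂ) / 2) with hC
    set P : ℂ := ∏ x ∈ Finset.Icc 1 (n - 1),
      Complex.cos ((Real.pi : ℂ) * (x : ℂ) * (ν : ℂ) / 2) /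
        Complex.sin ((Real.pi : ℂ) * (x : ℂ) * (ν : ℂ) / 2) with hP
    clear_value S S1 C P
    field_simp
    ring
end
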